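/- Let M be a prime Γ-ring satisfying assumption (A) and J a nonzero left ideal. If f is a generalized derivation with associated derivation D that is commuting on J, then for all a ∈ J, b ∈ J, r ∈ M and α, β, γ ∈ Γ, one has [r,a]_α β a γ D(a) = 0. -/
import Mathlib


structure GammaRing (M : Type*) (Γ : Type*) [AddCommGroup M] [AddCommGroup Γ] where
  tp : M → Γ → M → M
  add_left : ∀ (x y : M) (α : Γ) (z : M), tp (x + y) α z = tp x α z + tp y α z
  add_mid : ∀ (x : M) (α β : Γ) (z : M), tp x (α + β) z = tp x α z + tp x β z
  add_right : ∀ (x : M) (α : Γ) (y z : M), tp x α (y + z) = tp x α y + tp x α z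
  assoc : ∀ (x : M) (α : Γ) (y : M) (β : Γ) (z : M),
    tp (tp x α y) β z = tp x α (tp y β z)

namespace GammaRing

variable {M Γ : Type*} [AddCommGroup M] [AddCommGroup Γ] (G : GammaRing M Γ)

/-- The commutator `[x,y]_α = xαy - yαx`. -/
def comm (x : M) (α : Γ) (y : M) : M := G.tp x α y - G.tp y α x

/-- The centre `Z(M)`. -/
def center : Set M := {z | ∀ (α : Γ) (y : M), G.tp z α y = G.tp y α z}

/-- `M` is a prime Γ-ring. -/
def IsPrime : Prop :=
  ∀ a b : M, (∀ (x : M) (α β : Γ), G.tp (G.tp a α x) β b = 0) → a = 0 ∨ b = 0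

/-- Assumption (A): `xαyβz = xβyαz`. -/
def AssumptionA : Prop :=
  ∀ (x y z : M) (α β : Γ), G.tp (G.tp x α y) β z = G.tp (G.tp x β y) α z

/-- `D` is a derivation on `M`. -/
def IsDerivation (D : M → M) : Prop :=
  (∀ x y : M, D (x + y) = D x + D y) ∧
    ∀ (x : M) (α : Γ) (y : M), D (G.tp x α y) = G.tp (D x) α y + G.tp x α (D y)

/-- `f` is a generalized derivation with associated derivation `D`. -/
def IsGenDerivation (f D : M → M) : Prop :=
  (∀ x y : M, f (x + y) = f x + f y) ∧
    ∀ (x : M) (α : Γ) (y : M), f (G.tp x α y) = G.tp (f x) α y + G.tp x α (D y)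

/-- `J` is a left ideal. -/
def IsLeftIdeal (J : AddSubgroup M) : Prop :=
  ∀ (m : M) (α : Γ) (j : M), j ∈ J → G.tp m α j ∈ J

/-- `f` is commuting on `J`. -/
def CommutingOn (f : M → M) (J : AddSubgroup M) : Prop :=
  ∀ a ∈ J, ∀ α : Γ, G.comm (f a) α a = 0

/-- `f` is centralizing on `J`. -/
def CentralizingOn (f : M → M) (J : AddSubgroup M) : Prop :=
  ∀ a ∈ J, ∀ α : Γ, G.comm (f a) α a ∈ G.center

/-- `M` is a commutative Γ-ring. -/
def IsCommutative : Prop := ∀ (x : M) (α : Γ) (y : M), G.tp x α y = G.tp y α x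

end GammaRing


namespace GammaRing

variable {M Γ : Type*} [AddCommGroup M] [AddCommGroup Γ] (G : GammaRing M Γ)

lemma tp_zero_left' (α : Γ) (z : M) : G.tp 0 α z = 0 := by
  have h : G.tp 0 α z + G.tp 0 α z = 0 + G.tp 0 α z := by
    rw [zero_add]; simpa using (G.add_left 0 0 α z).symm
  exact add_right_cancel h

lemma tp_zero_right' (x : M) (α : Γ) : G.tp x α 0 = 0 := by
  have h : G.tp x α 0 + G.tp x α 0 = 0 + G.tp x α 0 := by
    rw [zero_add]; simpa using (G.add_right x α 0 0).symm
  exact add_right_cancel h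

lemma tp_neg_left' (x : M) (α : Γ) (z : M) : G.tp (-x) α z = -G.tp x α z := by
  have h := G.add_left x (-x) α z
  rw [add_neg_cancel, tp_zero_left'] at h
  exact eq_neg_of_add_eq_zero_right h.symm

lemma tp_neg_right' (x : M) (α : Γ) (z : M) : G.tp x α (-z) = -G.tp x α z := by
  have h := G.add_right x α z (-z)
  rw [add_neg_cancel, tp_zero_right'] at h
  exact eq_neg_of_add_eq_zero_right h.symm

lemma tp_sub_left' (x y : M) (α : Γ) (z : M) :
    G.tp (x - y) α z = G.tp x α z - G.tp y α z := by
  rw [sub_eq_add_neg, G.add_left, tp_neg_left', ← sub_eq_add_neg]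

lemma tp_sub_right' (x : M) (α : Γ) (y z : M) :
    G.tp x α (y - z) = G.tp x α y - G.tp x α z := by
  rw [sub_eq_add_neg, G.add_right, tp_neg_right', ← sub_eq_add_neg]

lemma comm_self' (x : M) (α : Γ) : G.comm x α x = 0 := sub_self _

lemma comm_add_left' (x y : M) (α : Γ) (z : M) :
    G.comm (x + y) α z = G.comm x α z + G.comm y α z := by
  simp only [comm, G.add_left, G.add_right]; abel

lemma comm_add_right' (x : M) (α : Γ) (y z : M) :
    G.comm x α (y + z) = G.comm x α y + G.comm x α z := by
  simp only [comm, G.add_left, G.add_right]; abel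

lemma hA' (hA : G.AssumptionA) (x : M) (α : Γ) (y : M) (β : Γ) (z : M) :
    G.tp x α (G.tp y β z) = G.tp x β (G.tp y α z) := by
  rw [← G.assoc, ← G.assoc, hA]

lemma comm_tp_right' (hA : G.AssumptionA) (x : M) (α : Γ) (y : M) (β : Γ) (z : M) :
    G.comm x α (G.tp y β z) = G.tp y β (G.comm x α z) + G.tp (G.comm x α y) β z := by
  simp only [comm, tp_sub_left', tp_sub_right', G.assoc]
  rw [G.hA' hA y β x α z]
  abel

lemma comm_tp_left' (hA : G.AssumptionA) (y : M) (β : Γ) (z : M) (α : Γ) (x : M) :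
    G.comm (G.tp y β z) α x = G.tp (G.comm y α x) β z + G.tp y β (G.comm z α x) := by
  simp only [comm, tp_sub_left', tp_sub_right', G.assoc]
  rw [G.hA' hA y α x β z]
  abel

end GammaRing
theorem stmt_12 {M Γ : Type*} [AddCommGroup M] [AddCommGroup Γ] (G : GammaRing M Γ)
    (hA : G.AssumptionA) (hP : G.IsPrime) (J : AddSubgroup M) (hJ : G.IsLeftIdeal J)
    (hJ0 : J ≠ ⊥) (f D : M → M) (hD : G.IsDerivation D) (hf : G.IsGenDerivation f D)
    (hcomm : G.CommutingOn f J) :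
    ∀ a ∈ J, ∀ b ∈ J, ∀ (r : M) (α β γ : Γ),
      G.tp (G.tp (G.comm r α a) β a) γ (D a) = 0 := by
  -- Linearization of the commuting condition
  have lin : ∀ x ∈ J, ∀ y ∈ J, ∀ δ : Γ,
      G.comm (f x) δ y + G.comm (f y) δ x = 0 := by
    intro x hx y hy δ
    have h := hcomm (x + y) (J.add_mem hx hy) δ
    rw [hf.1, G.comm_add_left', G.comm_add_right', G.comm_add_right',
      hcomm x hx δ, hcomm y hy δ] at h
    rw [← h]; abel
  -- Equation (E)
  have stepE : ∀ x ∈ J, ∀ (s : M) (δ ε : Γ),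
      G.tp (G.comm (f x) δ s) ε x + G.tp (G.comm (f s) δ x) ε x +
        G.tp (G.comm s δ x) ε (D x) + G.tp s ε (G.comm (D x) δ x) = 0 := by
    intro x hx s δ ε
    have h := lin x hx (G.tp s ε x) (hJ s ε x hx) δ
    rw [hf.2 s ε x, G.comm_tp_right' hA (f x) δ s ε x, G.comm_add_left',
      G.comm_tp_left' hA (f s) ε x δ x, G.comm_tp_left' hA s ε (D x) δ x,
      hcomm x hx δ, G.comm_self', G.tp_zero_right', G.tp_zero_right'] at h
    rw [← h]; abel
  -- Equation (**)
  have step2 : ∀ x ∈ J, ∀ (s : M) (δ ε ζ : Γ),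
      G.tp (G.tp (G.comm s δ x) ε x) ζ (D x) +
        G.tp s ε (G.tp x ζ (G.comm (D x) δ x)) = 0 := by
    intro x hx s δ ε ζ
    have h1 := stepE x hx (G.tp s ε x) δ ζ
    rw [G.comm_tp_right' hA (f x) δ s ε x, hcomm x hx δ, G.tp_zero_right',
      hf.2 s ε x, G.comm_add_left', G.comm_tp_left' hA (f s) ε x δ x,
      G.comm_tp_left' hA s ε (D x) δ x, G.comm_tp_left' hA s ε x δ x,
      G.comm_self', G.tp_zero_right', G.tp_zero_right'] at h1
    simp only [G.add_left, G.add_right, G.assoc, G.tp_zero_left', G.tp_zero_right',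
      add_zero, zero_add] at h1
    have h2 := stepE x hx s δ ε
    have h2' := congrArg (fun w => G.tp w ζ x) h2
    simp only [G.add_left, G.assoc, G.tp_zero_left'] at h2'
    have h6 : _ - _ = (0 : M) - 0 := congrArg₂ (· - ·) h1 h2'
    rw [sub_zero] at h6
    simp only [G.assoc]
    rw [← h6]; abel
  -- step4
  have step4 : ∀ x ∈ J, ∀ (s t : M) (δ ε ζ η : Γ),
      G.tp (G.tp (G.comm s δ x) ε t) ζ (G.tp x η (D x)) = 0 := by
    intro x hx s t δ ε ζ η
    have h2 := step2 x hx t δ ζ η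
    simp only [G.assoc] at h2
    have h3 := eq_neg_of_add_eq_zero_left h2
    have h1 := step2 x hx (G.tp s ε t) δ ζ η
    rw [G.comm_tp_left' hA s ε t δ x] at h1
    simp only [G.add_left, G.assoc] at h1
    rw [h3, G.tp_neg_right'] at h1
    simp only [G.assoc]
    rw [← h1]; abel
  intro a ha b hb r α β γ
  rcases hP (G.comm r α a) (G.tp a γ (D a))
      (fun t δ ε => step4 a ha r t α δ ε γ) with h | h
  · rw [h, G.tp_zero_left', G.tp_zero_left']
  · rw [G.assoc, h, G.tp_zero_right']
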